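/- Let d ≥ 1, let X be a compact metric space, let f : X → X be a homeomorphism, let A be a continuous linear cocycle over f, and let P : X → (ℝ^d →L[ℝ] ℝ^d) be a continuous invariant splitting for A whose rank, rank(P(x)) = k ≥ 1, is constant in x; write E(x) = range P(x). Fix an integer m ≥ 1. If for every integer n ≥ 1 there exists x ∈ X with ‖A^{mn}(x)|E(x)‖ ≥ 1, then there exists p ∈ X such that the limit lim_{n→∞} (1/n) Σ_{ℓ=0}^{n−1} log ‖A^m(f^{mℓ} p)|E(f^{mℓ} p)‖ exists and is ≥ 0. -/

import Mathlib

/-!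
Write `Φₙ(x) = ‖A^n(x)|E(x)‖` and `φ = log Φₘ`. Invariance of `E` makes `Φ` submultiplicative
along orbits, so `log Φₘₙ ≤ Sₙφ`, the Birkhoff sum of `φ` over `g = f^m`, and the hypothesis says
`max Sₙφ ≥ 0`. As `E` varies continuously, `φ` is upper semicontinuous, so `aₙ = max Sₙφ` is
attained and subadditive, and by Fekete `aₙ / n → α ≥ 0`. If no point had `Sₙφ(p) ≥ nα` for all
`n`, compactness would give `K` and `δ > 0` such that every orbit drops `δ` below `nα` within `K`
steps, forcing `aₙ - nα → -∞`. At a point with `nα ≤ Sₙφ(p) ≤ aₙ` the averages converge to `α`.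
-/

open Filter Topology MeasureTheory

noncomputable section

variable {X : Type*}

/-- Positive iterates of a linear cocycle: `cpow f A n x = A(f^{n-1}x) ∘ ⋯ ∘ A(x)`. -/
def cpow {d : ℕ} (f : X → X)
    (A : X → (EuclideanSpace ℝ (Fin d) →L[ℝ] EuclideanSpace ℝ (Fin d))) :
    ℕ → X → (EuclideanSpace ℝ (Fin d) →L[ℝ] EuclideanSpace ℝ (Fin d))
  | 0, _ => 1
  | n + 1, x => cpow f A n (f x) ∘L A x

/-- Iterates of the cocycle over `ℤ`, with `A^{-n}(x) = (A^n(f^{-n}x))⁻¹`. -/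
def cIter {d : ℕ} [TopologicalSpace X] (f : X ≃ₜ X)
    (A : X → (EuclideanSpace ℝ (Fin d) →L[ℝ] EuclideanSpace ℝ (Fin d)))
    (n : ℤ) (x : X) : EuclideanSpace ℝ (Fin d) →L[ℝ] EuclideanSpace ℝ (Fin d) :=
  if 0 ≤ n then cpow f A n.toNat x
  else Ring.inverse (cpow f A (-n).toNat ((f.symm : X → X)^[(-n).toNat] x))

/-- Operator norm of the restriction of `T` to the subspace `E`, i.e. `‖T|E‖`. -/
def subNorm {d : ℕ} (T : EuclideanSpace ℝ (Fin d) →L[ℝ] EuclideanSpace ℝ (Fin d))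
    (E : Submodule ℝ (EuclideanSpace ℝ (Fin d))) : ℝ :=
  ‖T ∘L E.subtypeL‖

section BirkhoffSum

variable {g : X → X} {φ : X → ℝ}

theorem birkhoffSum_le_mul {B : ℝ} (hB : ∀ x, φ x ≤ B) (n : ℕ) (x : X) :
    birkhoffSum g φ n x ≤ n * B := by
  simpa [birkhoffSum] using Finset.sum_le_card_nsmul (Finset.range n) _ B fun k _ ↦ hB (g^[k] x)

theorem birkhoffSum_sub_const (c : ℝ) (n : ℕ) (x : X) :
    birkhoffSum g (fun y ↦ φ y - c) n x = birkhoffSum g φ n x - n * c := by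
  simp [birkhoffSum, Finset.sum_sub_distrib]

theorem birkhoffSum_add_mul_div_le {B δ : ℝ} {K : ℕ} (hB : ∀ x, φ x ≤ B) (hB₀ : 0 ≤ B)
    (hδ : 0 < δ) (hblock : ∀ x, ∃ k ≤ K, birkhoffSum g φ k x ≤ -δ) (n : ℕ) (x : X) :
    birkhoffSum g φ n x + δ * (n / K : ℕ) ≤ K * B := by
  induction n using Nat.strong_induction_on generalizing x with
  | _ n ih =>
    rcases lt_or_ge n K with hnK | hKn
    · have hn : (n : ℝ) * B ≤ K * B := by gcongr
      simp [Nat.div_eq_of_lt hnK, (birkhoffSum_le_mul hB n x).trans hn]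
    obtain ⟨k, hkK, hk⟩ := hblock x
    have hk₀ : k ≠ 0 := by rintro rfl; rw [birkhoffSum_zero] at hk; linarith
    obtain ⟨r, rfl⟩ := Nat.exists_eq_add_of_le (hkK.trans hKn)
    have hdiv : (k + r) / K ≤ r / K + 1 := by
      calc (k + r) / K ≤ (r + K) / K := Nat.div_le_div_right (by omega)
        _ = r / K + 1 := Nat.add_div_right r (by omega)
    have hdiv' : ((k + r) / K : ℕ) ≤ ((r / K : ℕ) : ℝ) + 1 := by exact_mod_cast hdiv
    have := ih r (by omega) (g^[k] x)
    rw [birkhoffSum_add]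
    nlinarith

theorem upperSemicontinuous_birkhoffSum [TopologicalSpace X] (hg : Continuous g)
    (hφ : UpperSemicontinuous φ) (n : ℕ) : UpperSemicontinuous (birkhoffSum g φ n) :=
  upperSemicontinuous_sum fun k _ ↦ hφ.comp (hg.iterate k)

variable [TopologicalSpace X] [CompactSpace X]

theorem UpperSemicontinuous.exists_forall_ge_of_compactSpace [Nonempty X] {β : Type*}
    [LinearOrder β] {u : X → β} (hu : UpperSemicontinuous u) : ∃ x, ∀ y, u y ≤ u x := by
  obtain ⟨x, -, hx⟩ :=
    (hu.upperSemicontinuousOn Set.univ).exists_isMaxOn Set.univ_nonempty isCompact_univ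
  exact ⟨x, fun y ↦ hx (Set.mem_univ y)⟩

theorem exists_uniform_birkhoffSum_le_neg (hg : Continuous g) (hφ : UpperSemicontinuous φ)
    (hneg : ∀ x, ∃ n, birkhoffSum g φ n x < 0) :
    ∃ K : ℕ, ∃ δ > 0, ∀ x, ∃ k ≤ K, birkhoffSum g φ k x ≤ -δ := by
  let U : ℕ → Set X := fun N ↦ ⋃ n ∈ Set.Iic N, birkhoffSum g φ n ⁻¹' Set.Iio (-(1 / (N + 1)))
  have hUopen (N : ℕ) : IsOpen (U N) :=
    isOpen_biUnion fun n _ ↦ (upperSemicontinuous_birkhoffSum hg hφ n).isOpen_preimage _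
  have hUcover : Set.univ ⊆ ⋃ N, U N := by
    intro x _
    obtain ⟨n, hn⟩ := hneg x
    obtain ⟨j, hj⟩ := exists_nat_one_div_lt (neg_pos.mpr hn)
    refine Set.mem_iUnion.mpr ⟨max n j, Set.mem_biUnion (le_max_left n j) ?_⟩
    have := Nat.one_div_le_one_div (α := ℝ) (le_max_right n j)
    simp only [Set.mem_preimage, Set.mem_Iio]
    linarith
  have hUmono : Monotone U := by
    intro N N' hN x hx
    simp only [U, Set.mem_iUnion, Set.mem_preimage, Set.mem_Iio, Set.mem_Iic] at hx ⊢
    obtain ⟨n, hn, hx⟩ := hx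
    have := Nat.one_div_le_one_div (α := ℝ) hN
    exact ⟨n, hn.trans hN, by linarith⟩
  obtain ⟨N, hN⟩ := isCompact_univ.elim_directed_cover U hUopen hUcover hUmono.directed_le
  refine ⟨N, 1 / (N + 1), by positivity, fun x ↦ ?_⟩
  have hx := hN (Set.mem_univ x)
  simp only [U, Set.mem_iUnion, Set.mem_preimage, Set.mem_Iio, Set.mem_Iic] at hx
  obtain ⟨n, hn, hx⟩ := hx
  exact ⟨n, hn, hx.le⟩

theorem exists_forall_birkhoffSum_nonneg (hg : Continuous g) (hφ : UpperSemicontinuous φ)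
    (hsup : ∀ n, ∃ x, 0 ≤ birkhoffSum g φ n x) : ∃ p, ∀ n, 0 ≤ birkhoffSum g φ n p := by
  by_contra! hneg
  have : Nonempty X := ⟨(hsup 0).choose⟩
  obtain ⟨K, δ, hδ, hblock⟩ := exists_uniform_birkhoffSum_le_neg hg hφ hneg
  obtain ⟨z, hz⟩ := hφ.exists_forall_ge_of_compactSpace
  have hB (x : X) : φ x ≤ max (φ z) 0 := (hz x).trans (le_max_left _ _)
  have hK : 0 < K := by
    obtain ⟨k, hkK, hk⟩ := hblock z
    rcases Nat.eq_zero_or_pos k with rfl | hk₀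
    · rw [birkhoffSum_zero] at hk; linarith
    · exact hk₀.trans_le hkK
  obtain ⟨N, hN⟩ := exists_nat_gt (K * max (φ z) 0 / δ)
  obtain ⟨x, hx⟩ := hsup (K * N)
  have := birkhoffSum_add_mul_div_le hB (le_max_right _ _) hδ hblock (K * N) x
  rw [Nat.mul_div_cancel_left N hK] at this
  rw [div_lt_iff₀ hδ] at hN
  linarith

theorem exists_tendsto_birkhoffAverage_nonneg (hg : Continuous g) (hφ : UpperSemicontinuous φ)
    (hsup : ∀ n, 0 < n → ∃ x, 0 ≤ birkhoffSum g φ n x) :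
    ∃ p, ∃ L, 0 ≤ L ∧ Tendsto (birkhoffAverage ℝ g φ · p) atTop (𝓝 L) := by
  have : Nonempty X := ⟨(hsup 1 one_pos).choose⟩
  choose xmax hxmax using fun n ↦
    (upperSemicontinuous_birkhoffSum hg hφ n).exists_forall_ge_of_compactSpace
  set a : ℕ → ℝ := fun n ↦ birkhoffSum g φ n (xmax n)
  have ha : Subadditive a := fun m n ↦ by
    simp only [a, birkhoffSum_add]
    exact add_le_add (hxmax m _) (hxmax n _)
  have ha₀ (n : ℕ) : 0 ≤ a n / n := by
    rcases Nat.eq_zero_or_pos n with rfl | hn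
    · simp
    · obtain ⟨x, hx⟩ := hsup n hn
      exact div_nonneg (hx.trans (hxmax n x)) n.cast_nonneg
  have hbdd : BddBelow (Set.range fun n ↦ a n / n) := ⟨0, by rintro _ ⟨n, rfl⟩; exact ha₀ n⟩
  have hlim := ha.tendsto_lim hbdd
  -- Fekete's limit `α` of `a n / n` is a lower bound for the averages along the orbit of some `p`.
  set α := ha.lim
  obtain ⟨p, hp⟩ : ∃ p, ∀ n, 0 ≤ birkhoffSum g (fun y ↦ φ y - α) n p := by
    refine exists_forall_birkhoffSum_nonneg hg (hφ.add upperSemicontinuous_const) fun n ↦ ?_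
    refine ⟨xmax n, ?_⟩
    rcases Nat.eq_zero_or_pos n with rfl | hn
    · simp
    · have := ha.lim_le_div hbdd hn.ne'
      rw [le_div_iff₀ (by exact_mod_cast hn)] at this
      rw [birkhoffSum_sub_const]
      linarith
  have hp' (n : ℕ) : n * α ≤ birkhoffSum g φ n p := by
    simpa [birkhoffSum_sub_const] using hp n
  refine ⟨p, α, ge_of_tendsto' hlim ha₀,
    tendsto_of_tendsto_of_tendsto_of_le_of_le' tendsto_const_nhds hlim ?_ ?_⟩
  all_goals
    filter_upwards [eventually_gt_atTop 0] with n hn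
    rw [birkhoffAverage, smul_eq_mul, inv_mul_eq_div]
  · rw [le_div_iff₀ (by exact_mod_cast hn), mul_comm]
    exact hp' n
  · exact div_le_div_of_nonneg_right (hxmax n p) n.cast_nonneg

end BirkhoffSum

section SubNorm

variable {d : ℕ} {T T' S : EuclideanSpace ℝ (Fin d) →L[ℝ] EuclideanSpace ℝ (Fin d)}
  {E E' : Submodule ℝ (EuclideanSpace ℝ (Fin d))}

theorem subNorm_nonneg : 0 ≤ subNorm T E := norm_nonneg (T ∘L E.subtypeL)

theorem norm_apply_le_subNorm_mul {v : EuclideanSpace ℝ (Fin d)} (hv : v ∈ E) :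
    ‖T v‖ ≤ subNorm T E * ‖v‖ :=
  (T ∘L E.subtypeL).le_opNorm ⟨v, hv⟩

theorem subNorm_le_of_forall {C : ℝ} (hC : 0 ≤ C) (h : ∀ v ∈ E, ‖T v‖ ≤ C * ‖v‖) :
    subNorm T E ≤ C :=
  (T ∘L E.subtypeL).opNorm_le_bound hC fun v ↦ h v v.2

theorem subNorm_one_le : subNorm 1 E ≤ 1 :=
  subNorm_le_of_forall zero_le_one fun v _ ↦ by simp

theorem subNorm_comp_le (hS : ∀ v ∈ E, S v ∈ E') :
    subNorm (T ∘L S) E ≤ subNorm T E' * subNorm S E :=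
  subNorm_le_of_forall (mul_nonneg subNorm_nonneg subNorm_nonneg) fun v hv ↦ by
    rw [mul_assoc]
    exact (norm_apply_le_subNorm_mul (hS v hv)).trans
      (mul_le_mul_of_nonneg_left (norm_apply_le_subNorm_mul hv) subNorm_nonneg)

theorem subNorm_pos (hT : IsUnit T) (hE : E ≠ ⊥) : 0 < subNorm T E := by
  obtain ⟨v, hv, hv₀⟩ := (Submodule.ne_bot_iff E).mp hE
  obtain ⟨T₁, hT₁⟩ := hT.exists_left_inv
  have hTv : T v ≠ 0 := fun h ↦ hv₀ <| by
    simpa [h] using congr($hT₁ v).symm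
  have := (norm_pos_iff.mpr hTv).trans_le (norm_apply_le_subNorm_mul (T := T) hv)
  exact pos_of_mul_pos_left this (norm_nonneg v)

theorem subNorm_range_le {P P' : EuclideanSpace ℝ (Fin d) →L[ℝ] EuclideanSpace ℝ (Fin d)}
    (hP' : P' ∘L P' = P') :
    subNorm T' (LinearMap.range P'.toLinearMap) ≤
      subNorm T (LinearMap.range P.toLinearMap) * (1 + ‖P' - P‖) + ‖T‖ * ‖P' - P‖ + ‖T' - T‖ := by
  have hC := subNorm_nonneg (T := T) (E := LinearMap.range P.toLinearMap)
  refine subNorm_le_of_forall (by positivity) fun v hv ↦ ?_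
  have hP'v : P' v = v := by
    obtain ⟨w, rfl⟩ := hv
    exact congr($hP' w)
  have hPv : P v = v - (P' - P) v := by
    rw [sub_apply, hP'v]
    abel
  have hdecomp : T' v = T (P v) + T ((P' - P) v) + (T' - T) v := by
    rw [hPv]; simp
  have h₁ : ‖T (P v)‖ ≤ subNorm T (LinearMap.range P.toLinearMap) * ((1 + ‖P' - P‖) * ‖v‖) := by
    refine (norm_apply_le_subNorm_mul (LinearMap.mem_range_self _ v)).trans ?_
    gcongr
    calc ‖P v‖ ≤ ‖v‖ + ‖(P' - P) v‖ := by rw [hPv]; exact norm_sub_le _ _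
      _ ≤ (1 + ‖P' - P‖) * ‖v‖ := by linarith [(P' - P).le_opNorm v]
  have h₂ : ‖T ((P' - P) v)‖ ≤ ‖T‖ * (‖P' - P‖ * ‖v‖) :=
    (T.le_opNorm _).trans (by gcongr; exact (P' - P).le_opNorm v)
  calc ‖T' v‖ ≤ ‖T (P v)‖ + ‖T ((P' - P) v)‖ + ‖(T' - T) v‖ := by
        rw [hdecomp]; exact norm_add₃_le
    _ ≤ _ := by linear_combination h₁ + h₂ + (T' - T).le_opNorm v

end SubNorm

theorem UpperSemicontinuous.log [TopologicalSpace X] {u : X → ℝ}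
    (hu : UpperSemicontinuous u) (hpos : ∀ x, 0 < u x) :
    UpperSemicontinuous fun x ↦ Real.log (u x) := by
  intro x₀ y hy
  filter_upwards [hu x₀ (Real.exp y) ((Real.log_lt_iff_lt_exp (hpos x₀)).1 hy)] with x hx
  exact (Real.log_lt_iff_lt_exp (hpos x)).2 hx

theorem upperSemicontinuous_subNorm_range [TopologicalSpace X] {d : ℕ}
    {T P : X → (EuclideanSpace ℝ (Fin d) →L[ℝ] EuclideanSpace ℝ (Fin d))}
    (hT : Continuous T) (hP : Continuous P) (hPproj : ∀ x, P x ∘L P x = P x) :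
    UpperSemicontinuous fun x ↦ subNorm (T x) (LinearMap.range (P x).toLinearMap) := by
  intro x₀ y hy
  set F : X → ℝ := fun x ↦ subNorm (T x₀) (LinearMap.range (P x₀).toLinearMap) *
    (1 + ‖P x - P x₀‖) + ‖T x₀‖ * ‖P x - P x₀‖ + ‖T x - T x₀‖
  have hF : Continuous F := by fun_prop
  have hFx₀ : F x₀ < y := by simpa [F] using hy
  filter_upwards [hF.continuousAt.eventually_lt continuousAt_const hFx₀] with x hx
  exact (subNorm_range_le (hPproj x)).trans_lt hx

section Cocycle

variable {d : ℕ} {f : X → X} {A P : X → (EuclideanSpace ℝ (Fin d) →L[ℝ] EuclideanSpace ℝ (Fin d))}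

theorem cpow_add (a b : ℕ) (x : X) :
    cpow f A (a + b) x = cpow f A b (f^[a] x) ∘L cpow f A a x := by
  induction a generalizing x with
  | zero => simp [cpow, ContinuousLinearMap.one_def]
  | succ a ih =>
    rw [Nat.add_right_comm, cpow, ih, cpow, Function.iterate_succ_apply,
      ContinuousLinearMap.comp_assoc]

theorem isUnit_cpow (hA : ∀ x, IsUnit (A x)) (n : ℕ) (x : X) : IsUnit (cpow f A n x) := by
  induction n generalizing x with
  | zero => exact isUnit_one
  | succ n ih => exact (ih (f x)).mul (hA x)

theorem continuous_cpow [TopologicalSpace X] (hf : Continuous f) (hA : Continuous A) (n : ℕ) :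
    Continuous (cpow f A n) := by
  induction n with
  | zero => exact continuous_const
  | succ n ih => exact (ih.comp hf).clm_comp hA

theorem cpow_comp_of_comp_eq (hPinv : ∀ x, A x ∘L P x = P (f x) ∘L A x) (n : ℕ) (x : X) :
    cpow f A n x ∘L P x = P (f^[n] x) ∘L cpow f A n x := by
  induction n generalizing x with
  | zero => simp [cpow, ContinuousLinearMap.one_def]
  | succ n ih =>
    rw [cpow, ContinuousLinearMap.comp_assoc, hPinv x, ← ContinuousLinearMap.comp_assoc, ih,
      Function.iterate_succ_apply, ContinuousLinearMap.comp_assoc]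

theorem cpow_apply_mem_range (hPinv : ∀ x, A x ∘L P x = P (f x) ∘L A x) (n : ℕ) (x : X)
    {v : EuclideanSpace ℝ (Fin d)} (hv : v ∈ LinearMap.range (P x).toLinearMap) :
    cpow f A n x v ∈ LinearMap.range (P (f^[n] x)).toLinearMap := by
  obtain ⟨w, rfl⟩ := hv
  exact ⟨cpow f A n x w, congr($(cpow_comp_of_comp_eq hPinv n x) w).symm⟩

variable (f A P) in
def cpowSubNorm (n : ℕ) (x : X) : ℝ :=
  subNorm (cpow f A n x) (LinearMap.range (P x).toLinearMap)

theorem cpowSubNorm_pos (hA : ∀ x, IsUnit (A x)) (hE : ∀ x, LinearMap.range (P x).toLinearMap ≠ ⊥)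
    (n : ℕ) (x : X) : 0 < cpowSubNorm f A P n x :=
  subNorm_pos (isUnit_cpow hA n x) (hE x)

theorem cpowSubNorm_add_le (hPinv : ∀ x, A x ∘L P x = P (f x) ∘L A x) (a b : ℕ) (x : X) :
    cpowSubNorm f A P (a + b) x ≤ cpowSubNorm f A P b (f^[a] x) * cpowSubNorm f A P a x := by
  rw [cpowSubNorm, cpow_add]
  exact subNorm_comp_le fun v hv ↦ cpow_apply_mem_range hPinv a x hv

theorem log_cpowSubNorm_mul_le (hA : ∀ x, IsUnit (A x))
    (hE : ∀ x, LinearMap.range (P x).toLinearMap ≠ ⊥)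
    (hPinv : ∀ x, A x ∘L P x = P (f x) ∘L A x) (m n : ℕ) (x : X) :
    Real.log (cpowSubNorm f A P (m * n) x) ≤
      birkhoffSum (f^[m]) (fun y ↦ Real.log (cpowSubNorm f A P m y)) n x := by
  induction n with
  | zero => exact Real.log_nonpos subNorm_nonneg subNorm_one_le
  | succ n ih =>
    have hpos := cpowSubNorm_pos hA hE (P := P) (f := f)
    rw [birkhoffSum_succ, ← Function.iterate_mul, Nat.mul_succ]
    calc Real.log (cpowSubNorm f A P (m * n + m) x)
        ≤ Real.log (cpowSubNorm f A P m (f^[m * n] x) * cpowSubNorm f A P (m * n) x) :=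
          Real.log_le_log (hpos _ _) (cpowSubNorm_add_le hPinv _ _ x)
      _ ≤ _ := by
          rw [Real.log_mul (hpos _ _).ne' (hpos _ _).ne']
          linarith

theorem upperSemicontinuous_cpowSubNorm [TopologicalSpace X] (hf : Continuous f)
    (hA : Continuous A) (hP : Continuous P) (hPproj : ∀ x, P x ∘L P x = P x) (n : ℕ) :
    UpperSemicontinuous (cpowSubNorm f A P n) :=
  upperSemicontinuous_subNorm_range (continuous_cpow hf hA n) hP hPproj

end Cocycle

theorem exists_point_nonneg_average_general {d : ℕ} [MetricSpace X] [CompactSpace X]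
    (f : X ≃ₜ X)
    (A : X → (EuclideanSpace ℝ (Fin d) →L[ℝ] EuclideanSpace ℝ (Fin d)))
    (hAcont : Continuous A) (hAinv : ∀ x, IsUnit (A x))
    (P : X → (EuclideanSpace ℝ (Fin d) →L[ℝ] EuclideanSpace ℝ (Fin d)))
    (hPcont : Continuous P)
    (hPproj : ∀ x, P x ∘L P x = P x)
    (hPinv : ∀ x, A x ∘L P x = P (f x) ∘L A x)
    (k : ℕ) (hk1 : 1 ≤ k)
    (hrank : ∀ x, Module.finrank ℝ (LinearMap.range (P x :
      EuclideanSpace ℝ (Fin d) →ₗ[ℝ] EuclideanSpace ℝ (Fin d))) = k)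
    (m : ℕ)
    (hnc : ∀ n : ℕ, 1 ≤ n → ∃ x : X,
      1 ≤ subNorm (cIter f A ((m * n : ℕ) : ℤ) x) (LinearMap.range (P x :
        EuclideanSpace ℝ (Fin d) →ₗ[ℝ] EuclideanSpace ℝ (Fin d)))) :
    ∃ p : X, ∃ L : ℝ, 0 ≤ L ∧
      Filter.Tendsto (fun n : ℕ => (1 / (n : ℝ)) *
        ∑ l ∈ Finset.range n,
          Real.log (subNorm (cIter f A (m : ℤ) ((f : X → X)^[m * l] p))
            (LinearMap.range ((P ((f : X → X)^[m * l] p) :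
              EuclideanSpace ℝ (Fin d) →ₗ[ℝ] EuclideanSpace ℝ (Fin d))))))
        Filter.atTop (𝓝 L) := by
  have hcIter (n : ℕ) (x : X) : cIter f A n x = cpow f A n x := by simp [cIter]
  have hE (x : X) : LinearMap.range (P x).toLinearMap ≠ ⊥ := by
    intro h
    have := hrank x
    rw [h, finrank_bot] at this
    omega
  set φ : X → ℝ := fun x ↦ Real.log (cpowSubNorm f A P m x)
  have hφ : UpperSemicontinuous φ :=
    (upperSemicontinuous_cpowSubNorm f.continuous hAcont hPcont hPproj m).log
      (cpowSubNorm_pos hAinv hE m)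
  obtain ⟨p, L, hL, hlim⟩ := exists_tendsto_birkhoffAverage_nonneg (f.continuous.iterate m) hφ
    fun n hn ↦ by
      obtain ⟨x, hx⟩ := hnc n hn
      rw [hcIter] at hx
      exact ⟨x, (Real.log_nonneg hx).trans (log_cpowSubNorm_mul_le hAinv hE hPinv m n x)⟩
  refine ⟨p, L, hL, hlim.congr fun n ↦ ?_⟩
  simp [birkhoffAverage, birkhoffSum, φ, cpowSubNorm, hcIter, Function.iterate_mul]

/-- Inequality (2) in cocycle form: if for every `n` some point fails to contract
along `E` in `mn` steps, then there is a point `p` whose Birkhoff average of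
`log ‖A^m|E‖` along the orbit of `f^m` exists and is nonnegative. -/
theorem exists_point_nonneg_average {d : ℕ} (hd : 1 ≤ d) [MetricSpace X] [CompactSpace X]
    (f : X ≃ₜ X)
    (A : X → (EuclideanSpace ℝ (Fin d) →L[ℝ] EuclideanSpace ℝ (Fin d)))
    (hAcont : Continuous A) (hAinv : ∀ x, IsUnit (A x))
    (P : X → (EuclideanSpace ℝ (Fin d) →L[ℝ] EuclideanSpace ℝ (Fin d)))
    (hPcont : Continuous P)
    (hPproj : ∀ x, P x ∘L P x = P x)
    (hPinv : ∀ x, A x ∘L P x = P (f x) ∘L A x)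
    (k : ℕ) (hk1 : 1 ≤ k)
    (hrank : ∀ x, Module.finrank ℝ (LinearMap.range (P x :
      EuclideanSpace ℝ (Fin d) →ₗ[ℝ] EuclideanSpace ℝ (Fin d))) = k)
    (m : ℕ) (hm : 1 ≤ m)
    (hnc : ∀ n : ℕ, 1 ≤ n → ∃ x : X,
      1 ≤ subNorm (cIter f A ((m * n : ℕ) : ℤ) x) (LinearMap.range (P x :
        EuclideanSpace ℝ (Fin d) →ₗ[ℝ] EuclideanSpace ℝ (Fin d)))) :
    ∃ p : X, ∃ L : ℝ, 0 ≤ L ∧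
      Filter.Tendsto (fun n : ℕ => (1 / (n : ℝ)) *
        ∑ l ∈ Finset.range n,
          Real.log (subNorm (cIter f A (m : ℤ) ((f : X → X)^[m * l] p))
            (LinearMap.range ((P ((f : X → X)^[m * l] p) :
              EuclideanSpace ℝ (Fin d) →ₗ[ℝ] EuclideanSpace ℝ (Fin d))))))
        Filter.atTop (𝓝 L) :=
  exists_point_nonneg_average_general f A hAcont hAinv P hPcont hPproj hPinv k hk1 hrank m hnc
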